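/- For every positive integer n, the limit of g(n,m) as m → ∞ exists and equals f(n); in particular, f is limit-computable via the computable double sequence g. -/

import Mathlib

/-!
Whether `y` is a duplicate of `x` depends only on the set of equations of `E_n` that `x`
satisfies, and there are only finitely many such sets. Choosing one tuple for each of them
gives a bound `B` such that every `x` satisfies exactly the equations satisfied by some
`x' ∈ {0,…,B}ⁿ`, so every duplicate of `x'` is one of `x`. Once `m > B`,
duplicating all of `{0,…,m-1}ⁿ` therefore duplicates all of `ℕⁿ`, so `g n m = fdup n`.
-/

/-- An equation from `E_n`: `x_k = 1`, `x_i + x_j = x_k`, or `x_i * x_j = x_k`. -/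
inductive Eqn (n : ℕ) : Type where
  | one (k : Fin n)
  | add (i j k : Fin n)
  | mul (i j k : Fin n)

def Eqn.holds {n : ℕ} (x : Fin n → ℕ) : Eqn n → Prop
  | .one k => x k = 1
  | .add i j k => x i + x j = x k
  | .mul i j k => x i * x j = x k

/-- `x` solves the system `S ⊆ E_n`. -/
def Solves {n : ℕ} (x : Fin n → ℕ) (S : Set (Eqn n)) : Prop :=
  ∀ e ∈ S, e.holds x

/-- Every solvable system `S ⊆ E_n` has a solution with all values `≤ b`. -/
def IsBound (n b : ℕ) : Prop :=
  ∀ S : Set (Eqn n), (∃ x, Solves x S) → ∃ x, Solves x S ∧ ∀ i, x i ≤ b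

/-- `f n` is the smallest such bound. -/
noncomputable def f (n : ℕ) : ℕ := sInf {b | IsBound n b}

/-- `y` is a duplicate of `x`. -/
def Dup {n : ℕ} (x y : Fin n → ℕ) : Prop :=
  (∀ k, x k = 1 → y k = 1) ∧
  (∀ i j k, x i + x j = x k → y i + y j = y k) ∧
  (∀ i j k, x i * x j = x k → y i * y j = y k)

/-- Every `x : ℕⁿ` has a duplicate in `{0,…,b}ⁿ`. -/
def DupBound (n b : ℕ) : Prop :=
  ∀ x : Fin n → ℕ, ∃ y, Dup x y ∧ ∀ i, y i ≤ b

/-- `f` expressed via duplicates. -/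
noncomputable def fdup (n : ℕ) : ℕ := sInf {b | DupBound n b}

/-- `g n m` : smallest `b` such that every `x ∈ {0,…,m-1}ⁿ` has a duplicate in `{0,…,b}ⁿ`. -/
noncomputable def g (n m : ℕ) : ℕ :=
  sInf {b | ∀ x : Fin n → ℕ, (∀ i, x i < m) → ∃ y, Dup x y ∧ ∀ i, y i ≤ b}

instance Eqn.finite (n : ℕ) : Finite (Eqn n) := by
  refine Finite.of_injective (fun e : Eqn n =>
    match e with
    | .one k => ((0 : Fin 3), k, k, k)
    | .add i j k => ((1 : Fin 3), i, j, k)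
    | .mul i j k => ((2 : Fin 3), i, j, k)) ?_
  intro a b hab
  cases a <;> cases b <;> simp_all

theorem exists_fiber_rep_le {α β : Type*} [Finite β] (φ : α → β) (h : α → ℕ) :
    ∃ B, ∀ a, ∃ a', φ a' = φ a ∧ h a' ≤ B := by
  let rep : Set.range φ → α := fun b => b.2.choose
  obtain ⟨B, hB⟩ := Finite.bddAbove_range (h ∘ rep)
  exact ⟨B, fun a => ⟨rep ⟨φ a, a, rfl⟩, (⟨a, rfl⟩ : ∃ a', φ a' = φ a).choose_spec,
    hB ⟨_, rfl⟩⟩⟩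

theorem dup_iff_forall_holds {n : ℕ} {x y : Fin n → ℕ} :
    Dup x y ↔ ∀ e : Eqn n, e.holds x → e.holds y := by
  refine ⟨fun ⟨h1, hadd, hmul⟩ e => ?_, fun h => ⟨fun k => h (.one k),
    fun i j k => h (.add i j k), fun i j k => h (.mul i j k)⟩⟩
  cases e with
  | one k => exact h1 k
  | add i j k => exact hadd i j k
  | mul i j k => exact hmul i j k

theorem Dup.trans {n : ℕ} {x y z : Fin n → ℕ} (hxy : Dup x y) (hyz : Dup y z) : Dup x z :=
  dup_iff_forall_holds.mpr fun e he =>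
    dup_iff_forall_holds.mp hyz e (dup_iff_forall_holds.mp hxy e he)

theorem exists_bound_dup (n : ℕ) : ∃ B, ∀ x : Fin n → ℕ, ∃ x', Dup x x' ∧ ∀ i, x' i ≤ B := by
  obtain ⟨B, hB⟩ := exists_fiber_rep_le (fun x : Fin n → ℕ => {e : Eqn n | e.holds x})
    (fun x => Finset.univ.sup x)
  refine ⟨B, fun x => ?_⟩
  obtain ⟨x', hx', hle⟩ := hB x
  refine ⟨x', dup_iff_forall_holds.mpr fun e he => ?_, fun i => ?_⟩
  · exact (Set.ext_iff.mp hx' e).mpr he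
  · exact (Finset.le_sup (Finset.mem_univ i)).trans hle

theorem dupBound_fdup (n : ℕ) : DupBound n (fdup n) := by
  obtain ⟨B, hB⟩ := exists_bound_dup n
  exact Nat.sInf_mem (s := {b | DupBound n b}) ⟨B, hB⟩

theorem g_le_fdup (n m : ℕ) : g n m ≤ fdup n :=
  Nat.sInf_le fun x _ => dupBound_fdup n x

theorem fdup_le_g {n m B : ℕ} (hB : ∀ x : Fin n → ℕ, ∃ x', Dup x x' ∧ ∀ i, x' i ≤ B)
    (hm : B < m) : fdup n ≤ g n m := by
  have hg : g n m ∈ {b | ∀ x : Fin n → ℕ, (∀ i, x i < m) → ∃ y, Dup x y ∧ ∀ i, y i ≤ b} :=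
    Nat.sInf_mem ⟨fdup n, fun x _ => dupBound_fdup n x⟩
  refine Nat.sInf_le fun x => ?_
  obtain ⟨x', hxx', hx'⟩ := hB x
  obtain ⟨y, hx'y, hy⟩ := hg x' fun i => (hx' i).trans_lt hm
  exact ⟨y, hxx'.trans hx'y, hy⟩

theorem stmt11_general (n : ℕ) :
    Filter.Tendsto (g n) Filter.atTop (nhds (fdup n)) := by
  obtain ⟨B, hB⟩ := exists_bound_dup n
  exact tendsto_atTop_of_eventually_const (i₀ := B + 1) fun m hm =>
    (g_le_fdup n m).antisymm (fdup_le_g hB hm)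

theorem stmt11 (n : ℕ) (hn : 0 < n) :
    Filter.Tendsto (g n) Filter.atTop (nhds (fdup n)) :=
  stmt11_general n
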